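/- Let F : ℝⁿ → ℝⁿ satisfy: for all x, ‖F(x)‖ ≤ M for some M > 0 (F plays the role of ∇f^η), and suppose x̂ satisfies the fixed-point relation x̂ = Π_X[x̂ − γ(F(x) + μ(x̂ − x))] for closed convex X, γ > 0, μ > 0. Define G_{X,γ}(x) := (1/γ)(x − Π_X[x − γF(x)]). Then ‖G_{X,γ}(x)‖ ≤ ((1 + |1 − γμ|)/γ)‖x̂ − x‖. In particular, if γμ > 1 then ‖G_{X,γ}(x)‖ ≤ μ‖x̂ − x‖. -/
import Mathlib


open scoped RealInnerProductSpace

/-- Bound on the projected-gradient residual `G_{X,γ}(x)` in terms of `‖x̂ - x‖`,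
where `x̂` is the fixed point of the prox-BR projection relation. -/
theorem stmt11 {n : ℕ} (X : Set (EuclideanSpace ℝ (Fin n)))
    (hXne : X.Nonempty) (hXcl : IsClosed X) (hXconv : Convex ℝ X)
    (proj : EuclideanSpace ℝ (Fin n) → EuclideanSpace ℝ (Fin n))
    (hproj : ∀ z, proj z ∈ X ∧ ∀ y ∈ X, ⟪z - proj z, y - proj z⟫ ≤ 0)
    (F : EuclideanSpace ℝ (Fin n) → EuclideanSpace ℝ (Fin n))
    (M : ℝ) (hM : 0 < M) (hF : ∀ z, ‖F z‖ ≤ M)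
    (γ μ : ℝ) (hγ : 0 < γ) (hμ : 0 < μ)
    (x xhat : EuclideanSpace ℝ (Fin n))
    (hfix : xhat = proj (xhat - γ • (F x + μ • (xhat - x)))) :
    ‖(1 / γ) • (x - proj (x - γ • F x))‖ ≤ ((1 + |1 - γ * μ|) / γ) * ‖xhat - x‖ ∧
    (1 < γ * μ → ‖(1 / γ) • (x - proj (x - γ • F x))‖ ≤ μ * ‖xhat - x‖) := by
  -- nonexpansiveness of proj
  have nonexp : ∀ z w, ‖proj z - proj w‖ ≤ ‖z - w‖ := by
    intro z w
    have h1 := (hproj z).2 (proj w) (hproj w).1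
    have h2 := (hproj w).2 (proj z) (hproj z).1
    set d := proj z - proj w with hd
    have key : ‖d‖ ^ 2 ≤ ⟪z - w, d⟫ := by
      have e1 : ⟪z - proj z, proj w - proj z⟫ = -⟪z - proj z, d⟫ := by
        rw [hd, ← inner_neg_right, neg_sub]
      have e2 : ⟪w - proj w, proj z - proj w⟫ = ⟪w - proj w, d⟫ := by rw [hd]
      have h1' : 0 ≤ ⟪z - proj z, d⟫ := by rw [e1] at h1; linarith
      have h2' : ⟪w - proj w, d⟫ ≤ 0 := by rw [e2] at h2; linarith
      have expand : ⟪z - w, d⟫ = ⟪z - proj z, d⟫ - ⟪w - proj w, d⟫ + ⟪d, d⟫ := by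
        rw [hd]
        simp only [inner_sub_left]
        ring
      rw [expand]
      have : ⟪d, d⟫ = ‖d‖ ^ 2 := real_inner_self_eq_norm_sq d
      linarith
    have cs : ⟪z - w, d⟫ ≤ ‖z - w‖ * ‖d‖ := real_inner_le_norm _ _
    rcases eq_or_ne d 0 with h0 | h0
    · rw [h0]; simp [norm_nonneg]
    · have hdpos : 0 < ‖d‖ := norm_pos_iff.mpr h0
      nlinarith [key, cs]
  set u := xhat - γ • (F x + μ • (xhat - x)) with hu
  set v := x - γ • F x with hv
  have hdiff : u - v = (1 - γ * μ) • (xhat - x) := by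
    rw [hu, hv]
    simp only [smul_add, smul_smul, sub_smul, one_smul, smul_sub]
    abel
  have hne : ‖proj u - proj v‖ ≤ |1 - γ * μ| * ‖xhat - x‖ := by
    calc ‖proj u - proj v‖ ≤ ‖u - v‖ := nonexp u v
    _ = |1 - γ * μ| * ‖xhat - x‖ := by rw [hdiff, norm_smul, Real.norm_eq_abs]
  have hmain : ‖x - proj v‖ ≤ (1 + |1 - γ * μ|) * ‖xhat - x‖ := by
    have tri : ‖x - proj v‖ ≤ ‖x - xhat‖ + ‖xhat - proj v‖ := norm_sub_le_norm_sub_add_norm_sub x xhat (proj v)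
    have hx : ‖x - xhat‖ = ‖xhat - x‖ := norm_sub_rev _ _
    have hxp : ‖xhat - proj v‖ = ‖proj u - proj v‖ := by rw [← hfix]
    nlinarith [hne]
  have hnorm : ‖(1 / γ) • (x - proj v)‖ = (1 / γ) * ‖x - proj v‖ := by
    rw [norm_smul, Real.norm_eq_abs, abs_of_pos (by positivity)]
  constructor
  · have e : (1 + |1 - γ * μ|) / γ * ‖xhat - x‖ = (1 / γ) * ((1 + |1 - γ * μ|) * ‖xhat - x‖) := by
      ring
    rw [hnorm, e]
    exact mul_le_mul_of_nonneg_left hmain (by positivity)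
  · intro hgm
    have habs : |1 - γ * μ| = γ * μ - 1 := by rw [abs_of_neg (by linarith : (1:ℝ) - γ * μ < 0)]; ring
    rw [hnorm]
    have : (1 / γ) * ‖x - proj v‖ ≤ (1 / γ) * ((1 + (γ * μ - 1)) * ‖xhat - x‖) := by
      rw [← habs]
      apply mul_le_mul_of_nonneg_left hmain (by positivity)
    calc (1 / γ) * ‖x - proj v‖ ≤ (1 / γ) * ((1 + (γ * μ - 1)) * ‖xhat - x‖) := this
    _ = μ * ‖xhat - x‖ := by field_simp; ring
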